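/- arXiv:1306.4536 — 8 statements merged into one kernel-verified Lean document; each statement's English description precedes it below -/
import Mathlib

section
/- The function H(z) = −z·log z is injective on the slit disk D = { z = r e^{iθ} : 0 < r < e^{-1}, |θ| < π }, where log denotes the principal branch of the logarithm. -/
/-!
Substituting `u = -log z` maps the slit disk onto the half strip `1 < re u, |im u| < π` and turns
`H` into `u ↦ u e^{-u} = exp (-(u - log u))`. On `re u ≥ m > 1` the logarithm is a contraction
(its derivative `1/u` has norm at most `1/m`), so `u ↦ u - log u` is injective there. Moreover
`arg u` lies between `0` and `im u`, so `u - log u` stays in the strip `|im| < π`, on which `exp`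
is injective.
-/

open Complex

/-- The slit disk `{ z = r e^{iθ} : 0 < r < R, |θ| < α }`. -/
def slitDisk (R α : ℝ) : Set ℂ := {z : ℂ | z ≠ 0 ∧ ‖z‖ < R ∧ |z.arg| < α}

open Set
open scoped Real

namespace Complex

lemma arg_le_im_of_one_le_re {u : ℂ} (hu : 1 ≤ u.re) (him : 0 ≤ u.im) : u.arg ≤ u.im := by
  have harg : |u.arg| < π / 2 := abs_arg_lt_pi_div_two_iff.mpr (Or.inl (one_pos.trans_le hu))
  calc u.arg ≤ Real.tan u.arg := Real.le_tan (arg_nonneg_iff.mpr him) (abs_lt.mp harg).2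
    _ = u.im / u.re := tan_arg u
    _ ≤ u.im := div_le_self him hu

lemma abs_im_sub_arg_le {u : ℂ} (hu : 1 ≤ u.re) : |u.im - u.arg| ≤ |u.im| := by
  rcases le_total 0 u.im with him | him
  · have h₀ : 0 ≤ u.arg := arg_nonneg_iff.mpr him
    have h₁ := arg_le_im_of_one_le_re hu him
    rw [abs_of_nonneg him, abs_le]
    constructor <;> linarith
  · have hconj : (starRingEnd ℂ u).arg = -u.arg := by
      rw [arg_conj, if_neg]
      exact (arg_lt_pi_iff.mpr (Or.inl (zero_le_one.trans hu))).ne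
    have him' : 0 ≤ (starRingEnd ℂ u).im := by simpa using him
    have h₀ := arg_nonneg_iff.mpr him'
    have h₁ := arg_le_im_of_one_le_re (u := starRingEnd ℂ u) (by simpa using hu) him'
    rw [hconj] at h₀ h₁
    rw [conj_im] at h₁
    rw [abs_of_nonpos him, abs_le]
    constructor <;> linarith

lemma norm_log_sub_log_le {m : ℝ} (hm : 0 < m) {u v : ℂ} (hu : m ≤ u.re) (hv : m ≤ v.re) :
    ‖log u - log v‖ ≤ ‖u - v‖ / m := by
  have hderiv : ∀ x ∈ {c : ℂ | m ≤ c.re}, HasDerivWithinAt log x⁻¹ {c | m ≤ c.re} x :=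
    fun x hx => (hasDerivAt_log (Or.inl (hm.trans_le hx))).hasDerivWithinAt
  have hbound : ∀ x ∈ {c : ℂ | m ≤ c.re}, ‖x⁻¹‖ ≤ m⁻¹ := fun x hx => by
    rw [norm_inv]
    exact inv_anti₀ hm (hx.trans (re_le_norm x))
  simpa [div_eq_mul_inv, mul_comm] using
    (convex_halfSpace_re_ge m).norm_image_sub_le_of_norm_hasDerivWithin_le hderiv hbound hv hu

lemma injOn_sub_log : InjOn (fun u : ℂ => u - log u) {u | 1 < u.re} := by
  intro u hu v hv huv
  simp only at huv
  have hm : 1 < min u.re v.re := lt_min hu hv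
  have hlog : log u - log v = u - v := by linear_combination -huv
  by_contra hne
  have hpos : 0 < ‖u - v‖ := norm_pos_iff.mpr (sub_ne_zero.mpr hne)
  have := norm_log_sub_log_le (one_pos.trans hm) (min_le_left _ _) (min_le_right _ _)
  rw [hlog] at this
  exact this.not_gt (div_lt_self hpos hm)

lemma injOn_exp_abs_im_lt_pi : InjOn exp {z : ℂ | |z.im| < π} := fun x hx y hy h => by
  rw [← log_exp (abs_lt.mp hx).1 (abs_lt.mp hx).2.le, h,
    log_exp (abs_lt.mp hy).1 (abs_lt.mp hy).2.le]

lemma mul_exp_neg_eq_exp_neg_sub_log {u : ℂ} (hu : u ≠ 0) : u * exp (-u) = exp (-(u - log u)) := by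
  rw [neg_sub, exp_sub, exp_log hu, div_eq_mul_inv, exp_neg]

lemma abs_im_neg_sub_log_lt_pi {u : ℂ} (hre : 1 ≤ u.re) (him : |u.im| < π) :
    |(-(u - log u)).im| < π := by
  rw [neg_im, abs_neg, sub_im, log_im]
  exact (abs_im_sub_arg_le hre).trans_lt him

lemma injOn_mul_exp_neg : InjOn (fun u : ℂ => u * exp (-u)) {u | 1 < u.re ∧ |u.im| < π} := by
  intro u ⟨hu, hui⟩ v ⟨hv, hvi⟩ huv
  have hne : ∀ w : ℂ, 1 < w.re → w ≠ 0 := fun w hw h => by norm_num [h] at hw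
  simp only [mul_exp_neg_eq_exp_neg_sub_log (hne u hu),
    mul_exp_neg_eq_exp_neg_sub_log (hne v hv)] at huv
  exact injOn_sub_log hu hv <| neg_injective <| injOn_exp_abs_im_lt_pi
    (abs_im_neg_sub_log_lt_pi hu.le hui) (abs_im_neg_sub_log_lt_pi hv.le hvi) huv

end Complex

/-- `H(z) = -z log z` is injective on the slit disk of radius `e^{-1}`. -/
theorem stmt2 :
    Set.InjOn (fun z : ℂ => -z * Complex.log z) (slitDisk (Real.exp (-1)) Real.pi) := by
  have hmaps : MapsTo (fun z : ℂ => -log z) (slitDisk (Real.exp (-1)) π)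
      {u | 1 < u.re ∧ |u.im| < π} := fun z ⟨hz, hnorm, harg⟩ => by
    have : Real.log ‖z‖ < -1 := (Real.log_lt_iff_lt_exp (norm_pos_iff.mpr hz)).mpr hnorm
    refine ⟨?_, ?_⟩
    · rw [neg_re, log_re]; linarith
    · rwa [neg_im, log_im, abs_neg]
  have hlog : InjOn (fun z : ℂ => -log z) (slitDisk (Real.exp (-1)) π) := fun z hz w hw h => by
    simpa [exp_log hz.1, exp_log hw.1] using congrArg (fun u => exp (-u)) h
  refine (injOn_mul_exp_neg.comp hlog hmaps).congr fun z hz => ?_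
  simp [exp_log hz.1, mul_comm]
end

section
/- For z = r e^{iθ} with 0 < r ≤ e^{-1/2} and θ ∈ (−π,π), the argument of H(z) = −z log z satisfies |Arg H(z)| ≤ |θ|; in particular H(z) is not a negative real number. -/
/-!
Write `z = r e^{iθ}` and `L = -log r ≥ 1/2`. Then `-z log z = z · (L - iθ)` and, as `L > 0`,
`Arg (L - iθ) = -arctan (θ / L)`. Since `arctan (θ / L)` has the sign of `θ` and modulus at most
`|θ| / L ≤ 2|θ|`, the sum `θ - arctan (θ / L)` stays in `[-|θ|, |θ|] ⊂ (-π, π)`, so it is the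
principal argument of the product.
-/

open Real

theorem Real.arctan_le_self {x : ℝ} (hx : 0 ≤ x) : arctan x ≤ x := by
  simpa only [tan_arctan] using le_tan (arctan_nonneg.mpr hx) (arctan_lt_pi_div_two x)

theorem Real.abs_sub_arctan_div_le (θ : ℝ) {L : ℝ} (hL : 1 / 2 ≤ L) :
    |θ - arctan (θ / L)| ≤ |θ| := by
  have hL₀ : 0 < L := by linarith
  have key : ∀ θ : ℝ, 0 ≤ θ → |θ - arctan (θ / L)| ≤ |θ| := by
    intro θ hθ
    have hdiv : 0 ≤ θ / L := div_nonneg hθ hL₀.le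
    have h_small : θ / L ≤ 2 * θ := by
      rw [div_le_iff₀ hL₀]
      nlinarith
    have h₀ := arctan_nonneg.mpr hdiv
    have h₁ := arctan_le_self hdiv
    rw [abs_of_nonneg hθ, abs_le]
    constructor <;> linarith
  rcases le_total 0 θ with hθ | hθ
  · exact key θ hθ
  · have h := key (-θ) (neg_nonneg.mpr hθ)
    rwa [neg_div, arctan_neg, sub_neg_eq_add, neg_add_eq_sub, abs_sub_comm, abs_neg] at h

namespace Complex

theorem arg_eq_arctan_of_re_pos {w : ℂ} (hw : 0 < w.re) :
    w.arg = Real.arctan (w.im / w.re) := by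
  have h := abs_lt.mp (abs_arg_lt_pi_div_two_iff.mpr (Or.inl hw))
  rw [← tan_arg, Real.arctan_tan h.1 h.2]

theorem neg_log_re_pos {z : ℂ} (hz : z ≠ 0) (hr : ‖z‖ < 1) : 0 < (-log z).re := by
  simpa [log_re] using Real.log_neg (norm_pos_iff.mpr hz) hr

theorem arg_neg_log {z : ℂ} (hz : z ≠ 0) (hr : ‖z‖ < 1) :
    (-log z).arg = -Real.arctan (z.arg / -Real.log ‖z‖) := by
  rw [arg_eq_arctan_of_re_pos (neg_log_re_pos hz hr), ← Real.arctan_neg]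
  simp [log_re, log_im, neg_div]

theorem arg_neg_mul_log {z : ℂ} (hz : z ≠ 0) (hL : 1 / 2 ≤ -Real.log ‖z‖)
    (hθ : |z.arg| < π) :
    (-z * log z).arg = z.arg - Real.arctan (z.arg / -Real.log ‖z‖) := by
  have hr : ‖z‖ < 1 := (Real.log_neg_iff (norm_pos_iff.mpr hz)).mp (by linarith)
  have hw : -log z ≠ 0 := ne_of_apply_ne re (neg_log_re_pos hz hr).ne'
  have hbound := (abs_sub_arctan_div_le z.arg hL).trans_lt hθ
  rw [neg_mul_comm, arg_mul hz hw] <;> rw [arg_neg_log hz hr, ← sub_eq_add_neg]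
  exact ⟨(abs_lt.mp hbound).1, (abs_lt.mp hbound).2.le⟩

end Complex

/-- For `z = r e^{iθ}` with `0 < r ≤ e^{-1/2}` and `θ ∈ (-π,π)`, one has
`|Arg(-z log z)| ≤ |θ|`; in particular `-z log z` is not a negative real number. -/
theorem stmt3 (z : ℂ) (hz : z ≠ 0) (hr : ‖z‖ ≤ Real.exp (-(1/2)))
    (hθ : |z.arg| < Real.pi) :
    |(-z * Complex.log z).arg| ≤ |z.arg| ∧
      ∀ x : ℝ, x < 0 → -z * Complex.log z ≠ (x : ℂ) := by
  have hL : 1 / 2 ≤ -Real.log ‖z‖ := by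
    linarith [(Real.log_le_iff_le_exp (norm_pos_iff.mpr hz)).mpr hr]
  have harg : |(-z * Complex.log z).arg| ≤ |z.arg| := by
    rw [Complex.arg_neg_mul_log hz hL hθ]
    exact abs_sub_arctan_div_le z.arg hL
  refine ⟨harg, fun x hx h => ?_⟩
  rw [h, Complex.arg_ofReal_of_neg hx, abs_of_pos pi_pos] at harg
  exact (harg.trans_lt hθ).false
end

section
/- Let ρ > 0 and z, z' be complex numbers not on the nonpositive real axis with ρ ≥ |z| ≥ 8|z'|, where ρ is small enough that |w log w| ≤ −2|w| ln|w| and −ln(|w|/8) ≤ −2 ln|w| hold for all w in the punctured slit disk of radius ρ. Then |z log z − z' log z'| ≥ −(1/2)|z| ln|z|. -/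
/-!
Since `|log z| ≥ -ln|z|`, the term `z log z` has modulus at least `-|z| ln|z|`. The smallness
condition on `ρ` forces `|z| ≤ 1/8`, so `|z'| ≤ |z|/8 ≤ e⁻¹` lies where `x ln x` is decreasing;
hence `|z' log z'| ≤ -2|z'| ln|z'| ≤ -(|z|/4) ln(|z|/8) ≤ -(1/2)|z| ln|z|`, and the reverse
triangle inequality leaves half of the lower bound.
-/

open Real

lemma neg_mul_log_norm_le_norm_mul_log (z : ℂ) :
    -(‖z‖ * log ‖z‖) ≤ ‖z * Complex.log z‖ := by
  rw [norm_mul, neg_mul_eq_mul_neg]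
  gcongr
  calc -log ‖z‖ ≤ |log ‖z‖| := neg_le_abs _
    _ = |(Complex.log z).re| := by rw [Complex.log_re]
    _ ≤ ‖Complex.log z‖ := Complex.abs_re_le_norm _

lemma le_inv_eight_of_neg_log_div_eight_le {a : ℝ} (ha : 0 < a)
    (h : -log (a / 8) ≤ -2 * log a) : a ≤ 8⁻¹ := by
  rw [log_div ha.ne' (by norm_num)] at h
  rw [← log_le_log_iff ha (by norm_num), log_inv]
  linarith

theorem stmt6_general (ρ : ℝ) (z z' : ℂ)
    (hz0 : z ≠ 0) (hzarg : |z.arg| < Real.pi)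
    (hz'0 : z' ≠ 0) (hz'arg : |z'.arg| < Real.pi)
    (hzρ : ‖z‖ ≤ ρ)
    (h8 : 8 * ‖z'‖ ≤ ‖z‖)
    (hsmall1 : ∀ w : ℂ, w ≠ 0 → |w.arg| < Real.pi → ‖w‖ ≤ ρ →
      ‖w * Complex.log w‖ ≤ -2 * (‖w‖ * Real.log (‖w‖)))
    (hsmall2 : ∀ w : ℂ, w ≠ 0 → |w.arg| < Real.pi → ‖w‖ ≤ ρ →
      -Real.log (‖w‖ / 8) ≤ -2 * Real.log (‖w‖)) :
    -(1/2) * (‖z‖ * Real.log (‖z‖))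
      ≤ ‖z * Complex.log z - z' * Complex.log z'‖ := by
  have hz_pos : 0 < ‖z‖ := norm_pos_iff.mpr hz0
  have hz'_pos : 0 < ‖z'‖ := norm_pos_iff.mpr hz'0
  have hlog := hsmall2 z hz0 hzarg hzρ
  have hz_small := le_inv_eight_of_neg_log_div_eight_le hz_pos hlog
  have hz_div_small : ‖z‖ / 8 ≤ exp (-1) := by linarith [exp_neg_one_gt_d9]
  have hz'_bound : ‖z' * Complex.log z'‖ ≤ -(1/2) * (‖z‖ * log ‖z‖) :=
    calc ‖z' * Complex.log z'‖ ≤ -2 * (‖z'‖ * log ‖z'‖) :=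
          hsmall1 z' hz'0 hz'arg (by linarith)
      _ ≤ -2 * (‖z‖ / 8 * log (‖z‖ / 8)) := by
          have := mul_log_strictAntiOn.antitoneOn ⟨hz'_pos.le, by linarith⟩
            ⟨by positivity, hz_div_small⟩ (show ‖z'‖ ≤ ‖z‖ / 8 by linarith)
          linarith
      _ = ‖z‖ / 4 * -log (‖z‖ / 8) := by ring
      _ ≤ ‖z‖ / 4 * (-2 * log ‖z‖) := by gcongr
      _ = -(1/2) * (‖z‖ * log ‖z‖) := by ring
  calc -(1/2) * (‖z‖ * log ‖z‖) = -(‖z‖ * log ‖z‖) - -(1/2) * (‖z‖ * log ‖z‖) := by ring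
    _ ≤ ‖z * Complex.log z‖ - ‖z' * Complex.log z'‖ :=
        sub_le_sub (neg_mul_log_norm_le_norm_mul_log z) hz'_bound
    _ ≤ _ := norm_sub_norm_le _ _

/-- If `ρ ≥ |z| ≥ 8|z'|` with `z, z'` off the nonpositive real axis, and `ρ` is small
enough that `|w log w| ≤ -2|w| ln|w|` and `-ln(|w|/8) ≤ -2 ln|w|` hold on the punctured
slit disk of radius `ρ`, then `|z log z - z' log z'| ≥ -(1/2)|z| ln|z|`. -/
theorem stmt6 (ρ : ℝ) (hρ : 0 < ρ) (z z' : ℂ)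
    (hz0 : z ≠ 0) (hzarg : |z.arg| < Real.pi)
    (hz'0 : z' ≠ 0) (hz'arg : |z'.arg| < Real.pi)
    (hzρ : ‖z‖ ≤ ρ)
    (h8 : 8 * ‖z'‖ ≤ ‖z‖)
    (hsmall1 : ∀ w : ℂ, w ≠ 0 → |w.arg| < Real.pi → ‖w‖ ≤ ρ →
      ‖w * Complex.log w‖ ≤ -2 * (‖w‖ * Real.log (‖w‖)))
    (hsmall2 : ∀ w : ℂ, w ≠ 0 → |w.arg| < Real.pi → ‖w‖ ≤ ρ →
      -Real.log (‖w‖ / 8) ≤ -2 * Real.log (‖w‖)) :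
    -(1/2) * (‖z‖ * Real.log (‖z‖))
      ≤ ‖z * Complex.log z - z' * Complex.log z'‖ :=
  stmt6_general ρ z z' hz0 hzarg hz'0 hz'arg hzρ h8 hsmall1 hsmall2
end

section
/- Let Ω(y) be a real power series with Ω(0) = 0 and Ω'(0) > 0, analytic on [0,ω) where ω ∈ (0,∞] is its first singularity on the positive real axis. Let Y be the unique power series with Y(0)=0 and Ω(Y(z)) = z. Define τ as the smallest y in [0,ω) with Ω'(y) = 0 if such exists, and τ = ω otherwise. Then there exists ρ ∈ (0,∞] such that Y extends analytically to a neighbourhood of [0,ρ), is real-valued and strictly increasing there, satisfies Ω(Y(z)) = z and Y(z) ∈ [0,ω) for z ∈ [0,ρ), and Y(z) → τ as z → ρ⁻ while Ω(y) → ρ as y → τ⁻. -/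
open Filter Set Function Topology

/-!
Since `τ` is the first zero of `Ω'` on `[0, ω)` and `Ω'(0) > 0`, the intermediate value theorem
gives `Ω' > 0` on `[0, τ)`, hence also on an open interval `J ⊇ [0, τ)`. So `Ω` is strictly
increasing on `J`, maps `[0, τ)` onto `[0, ρ)` with `ρ = sup_{[0, τ)} Ω`, and its inverse on `J`
is analytic by the analytic inverse function theorem. Both limits are then limits of monotone
functions at the right end of an interval.
-/

lemma analyticAt_invFunOn {𝕜 : Type*} [NontriviallyNormedField 𝕜] [CompleteSpace 𝕜] [CharZero 𝕜]
    {f : 𝕜 → 𝕜} {J : Set 𝕜} (hJ : IsOpen J) (hinj : InjOn f J) {y : 𝕜} (hy : y ∈ J)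
    (hf : AnalyticAt 𝕜 f y) (hf' : deriv f y ≠ 0) :
    AnalyticAt 𝕜 (invFunOn f J) (f y) := by
  set g := hf.hasStrictDerivAt.localInverse _ _ _ hf'
  have hgy : g (f y) = y := HasStrictFDerivAt.localInverse_apply_image ..
  have hg : AnalyticAt 𝕜 g (f y) := hf.analyticAt_localInverse hf'
  have hgJ : ∀ᶠ z in 𝓝 (f y), g z ∈ J :=
    hg.continuousAt.preimage_mem_nhds (by rw [hgy]; exact hJ.mem_nhds hy)
  refine hg.congr ?_
  filter_upwards [hgJ, HasStrictDerivAt.eventually_right_inverse ..] with z hzJ hfgz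
  calc g z = invFunOn f J (f (g z)) := (hinj.leftInvOn_invFunOn hzJ).symm
    _ = invFunOn f J z := congrArg _ hfgz

lemma pos_of_continuousOn_Icc_of_ne_zero {g : ℝ → ℝ} {a b : ℝ} (hab : a ≤ b)
    (hg : ContinuousOn g (Icc a b)) (ha : 0 < g a) (hne : ∀ c ∈ Icc a b, g c ≠ 0) :
    0 < g b := by
  by_contra! hb
  obtain ⟨c, hc, hgc⟩ := intermediate_value_Icc' hab hg ⟨hb, ha.le⟩
  exact hne c hc hgc

namespace EReal

variable {f : ℝ → ℝ} {J : Set ℝ} {a : ℝ} {σ : EReal}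

lemma mem_comap_coe_nhdsLT {c : EReal} (hc : c < σ) :
    {x : ℝ | c < x ∧ (x : EReal) < σ} ∈ comap ((↑) : ℝ → EReal) (𝓝[<] σ) :=
  preimage_mem_comap (Ioo_mem_nhdsLT hc)

lemma tendsto_comap_coe_nhdsLT_of_monotoneOn {τ : EReal}
    (ha : (a : EReal) < σ) (hf : MonotoneOn f {x | a ≤ x ∧ (x : EReal) < σ})
    (hlt : ∀ x, a ≤ x → (x : EReal) < σ → (f x : EReal) < τ)
    (hsup : ∀ c < τ, ∃ x, a ≤ x ∧ (x : EReal) < σ ∧ c < f x) :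
    Tendsto (fun x => (f x : EReal)) (comap (↑) (𝓝[<] σ)) (𝓝 τ) := by
  rw [tendsto_order]
  refine ⟨fun c hc => ?_, fun c hc => ?_⟩
  · obtain ⟨x, hax, hxσ, hcx⟩ := hsup c hc
    filter_upwards [mem_comap_coe_nhdsLT hxσ] with x' ⟨hxx', hx'σ⟩
    have hxx' : x ≤ x' := EReal.coe_le_coe_iff.mp hxx'.le
    exact hcx.trans_le (EReal.coe_le_coe_iff.mpr (hf ⟨hax, hxσ⟩ ⟨hax.trans hxx', hx'σ⟩ hxx'))
  · filter_upwards [mem_comap_coe_nhdsLT ha] with x ⟨hax, hxσ⟩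
    exact (hlt x (EReal.coe_le_coe_iff.mp hax.le) hxσ).trans hc

lemma exists_eq_of_lt_sSup_image (hf : ContinuousOn f {x | a ≤ x ∧ (x : EReal) < σ}) {z : ℝ}
    (hz : f a ≤ z)
    (hzσ : (z : EReal) < sSup ((fun x => (f x : EReal)) '' {x | a ≤ x ∧ (x : EReal) < σ})) :
    ∃ x, a ≤ x ∧ (x : EReal) < σ ∧ f x = z := by
  obtain ⟨_, ⟨b, ⟨hab, hbσ⟩, rfl⟩, hzb⟩ := lt_sSup_iff.mp hzσ
  have hIcc : Icc a b ⊆ {x | a ≤ x ∧ (x : EReal) < σ} :=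
    fun x hx => ⟨hx.1, (EReal.coe_le_coe_iff.mpr hx.2).trans_lt hbσ⟩
  obtain ⟨x, hx, hfx⟩ :=
    intermediate_value_Icc hab (hf.mono hIcc) ⟨hz, (EReal.coe_lt_coe_iff.mp hzb).le⟩
  exact ⟨x, (hIcc hx).1, (hIcc hx).2, hfx⟩

lemma coe_lt_sSup_image (hf : StrictMonoOn f {x | a ≤ x ∧ (x : EReal) < σ}) {x : ℝ}
    (hax : a ≤ x) (hxσ : (x : EReal) < σ) :
    (f x : EReal) < sSup ((fun x => (f x : EReal)) '' {x | a ≤ x ∧ (x : EReal) < σ}) := by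
  obtain ⟨x', hxx', hx'σ⟩ := exists_between_coe_real hxσ
  have hxx' : x < x' := EReal.coe_lt_coe_iff.mp hxx'
  have hx' : x' ∈ {x | a ≤ x ∧ (x : EReal) < σ} := ⟨hax.trans hxx'.le, hx'σ⟩
  exact (EReal.coe_lt_coe_iff.mpr (hf ⟨hax, hxσ⟩ hx' hxx')).trans_le
    (le_sSup (mem_image_of_mem _ hx'))

lemma tendsto_comap_coe_nhdsLT_sSup_image (hf : StrictMonoOn f {x | a ≤ x ∧ (x : EReal) < σ})
    (ha : (a : EReal) < σ) :
    Tendsto (fun x => (f x : EReal)) (comap (↑) (𝓝[<] σ))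
      (𝓝 (sSup ((fun x => (f x : EReal)) '' {x | a ≤ x ∧ (x : EReal) < σ}))) := by
  refine tendsto_comap_coe_nhdsLT_of_monotoneOn ha hf.monotoneOn
    (fun x hax hxσ => coe_lt_sSup_image hf hax hxσ) fun c hc => ?_
  obtain ⟨_, ⟨x, hx, rfl⟩, hcx⟩ := lt_sSup_iff.mp hc
  exact ⟨x, hx.1, hx.2, hcx⟩

section Inverse

variable (hf : StrictMonoOn f J) (hJ : {x | a ≤ x ∧ (x : EReal) < σ} ⊆ J)
  (hfc : ContinuousOn f {x | a ≤ x ∧ (x : EReal) < σ})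
include hf hJ hfc

lemma invFunOn_mem_of_lt_sSup_image {z : ℝ} (hz : f a ≤ z)
    (hzσ : (z : EReal) < sSup ((fun x => (f x : EReal)) '' {x | a ≤ x ∧ (x : EReal) < σ})) :
    invFunOn f J z ∈ {x | a ≤ x ∧ (x : EReal) < σ} ∧ f (invFunOn f J z) = z := by
  obtain ⟨x, hax, hxσ, rfl⟩ := exists_eq_of_lt_sSup_image hfc hz hzσ
  rw [hf.injOn.leftInvOn_invFunOn (hJ ⟨hax, hxσ⟩)]
  exact ⟨⟨hax, hxσ⟩, rfl⟩

lemma strictMonoOn_invFunOn :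
    StrictMonoOn (invFunOn f J) {z | f a ≤ z ∧
      (z : EReal) < sSup ((fun x => (f x : EReal)) '' {x | a ≤ x ∧ (x : EReal) < σ})} := by
  intro z₁ hz₁ z₂ hz₂ h
  obtain ⟨hz₁S, hfz₁⟩ := invFunOn_mem_of_lt_sSup_image hf hJ hfc hz₁.1 hz₁.2
  obtain ⟨hz₂S, hfz₂⟩ := invFunOn_mem_of_lt_sSup_image hf hJ hfc hz₂.1 hz₂.2
  rwa [← (hf.mono hJ).lt_iff_lt hz₁S hz₂S, hfz₁, hfz₂]

lemma tendsto_invFunOn_comap_coe_nhdsLT_sSup_image (ha : (a : EReal) < σ) :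
    Tendsto (fun z => ((invFunOn f J z : ℝ) : EReal))
      (comap (↑) (𝓝[<] sSup ((fun x => (f x : EReal)) '' {x | a ≤ x ∧ (x : EReal) < σ})))
      (𝓝 σ) := by
  have hfS : StrictMonoOn f {x | a ≤ x ∧ (x : EReal) < σ} := hf.mono hJ
  refine tendsto_comap_coe_nhdsLT_of_monotoneOn (coe_lt_sSup_image hfS le_rfl ha)
    (strictMonoOn_invFunOn hf hJ hfc).monotoneOn
    (fun z hz hzρ => (invFunOn_mem_of_lt_sSup_image hf hJ hfc hz hzρ).1.2) fun c hc => ?_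
  obtain ⟨x, hcx, hxσ⟩ := exists_between_coe_real hc
  have hx : max x a ∈ {x | a ≤ x ∧ (x : EReal) < σ} :=
    ⟨le_max_right _ _, by rw [coe_strictMono.monotone.map_max]; exact max_lt hxσ ha⟩
  refine ⟨f (max x a), hfS.monotoneOn ⟨le_rfl, ha⟩ hx hx.1, coe_lt_sSup_image hfS hx.1 hx.2, ?_⟩
  rw [hf.injOn.leftInvOn_invFunOn (hJ hx)]
  exact hcx.trans_le (EReal.coe_le_coe_iff.mpr (le_max_left _ _))

end Inverse

end EReal

section DerivPos

variable {Ω : ℝ → ℝ} {τ : EReal}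

lemma deriv_pos_of_forall_deriv_ne_zero
    (hΩ' : ContinuousOn (deriv Ω) {y : ℝ | 0 ≤ y ∧ (y : EReal) < τ}) (hΩ'0 : 0 < deriv Ω 0)
    (hτ : ∀ y : ℝ, 0 ≤ y → (y : EReal) < τ → deriv Ω y ≠ 0) {y : ℝ} (hy : 0 ≤ y)
    (hyτ : (y : EReal) < τ) : 0 < deriv Ω y := by
  have hIcc : ∀ c ∈ Icc 0 y, 0 ≤ c ∧ (c : EReal) < τ :=
    fun c hc => ⟨hc.1, (EReal.coe_le_coe_iff.mpr hc.2).trans_lt hyτ⟩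
  exact pos_of_continuousOn_Icc_of_ne_zero hy (hΩ'.mono fun c hc => hIcc c hc) hΩ'0
    fun c hc => hτ c (hIcc c hc).1 (hIcc c hc).2

lemma exists_isOpen_strictMonoOn_of_forall_deriv_ne_zero
    (hΩan : AnalyticOnNhd ℝ Ω {y : ℝ | 0 ≤ y ∧ (y : EReal) < τ}) (hΩ'0 : 0 < deriv Ω 0)
    (hτ : ∀ y : ℝ, 0 ≤ y → (y : EReal) < τ → deriv Ω y ≠ 0) (hτ0 : 0 < τ) :
    ∃ J : Set ℝ, IsOpen J ∧ {y : ℝ | 0 ≤ y ∧ (y : EReal) < τ} ⊆ J ∧ StrictMonoOn Ω J ∧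
      ∀ y ∈ J, AnalyticAt ℝ Ω y ∧ 0 < deriv Ω y := by
  have hΩ0 : AnalyticAt ℝ Ω 0 := hΩan 0 ⟨le_rfl, hτ0⟩
  obtain ⟨ε, hε, hball⟩ := Metric.eventually_nhds_iff_ball.mp <| hΩ0.eventually_analyticAt.and <|
    hΩ0.deriv.continuousAt.eventually (eventually_gt_nhds hΩ'0)
  set J : Set ℝ := (↑) ⁻¹' Ioo ((-ε : ℝ) : EReal) τ
  have hJ : ∀ y ∈ J, AnalyticAt ℝ Ω y ∧ 0 < deriv Ω y := by
    rintro y ⟨hεy, hyτ⟩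
    rcases lt_or_ge y 0 with hy | hy
    · refine hball y ?_
      rw [Metric.mem_ball, Real.dist_eq, sub_zero, abs_lt]
      exact ⟨EReal.coe_lt_coe_iff.mp hεy, hy.trans hε⟩
    · exact ⟨hΩan y ⟨hy, hyτ⟩, deriv_pos_of_forall_deriv_ne_zero
      (fun c hc => (hΩan c hc).deriv.continuousAt.continuousWithinAt) hΩ'0 hτ hy hyτ⟩
  have hJo : IsOpen J := isOpen_Ioo.preimage continuous_coe_real_ereal
  have hJc : Convex ℝ J :=
    convex_iff_ordConnected.mpr (ordConnected_Ioo.preimage_mono EReal.coe_strictMono.monotone)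
  refine ⟨J, hJo, fun y hy => ⟨?_, hy.2⟩, ?_, hJ⟩
  · exact EReal.coe_lt_coe_iff.mpr ((neg_neg_of_pos hε).trans_le hy.1)
  · exact strictMonoOn_of_deriv_pos hJc (fun y hy => (hJ y hy).1.continuousAt.continuousWithinAt)
      fun y hy => (hJ y (interior_subset hy)).2

end DerivPos

/-- Inversion of a real power series along the positive axis. Let `Ω` be real-analytic
on a neighbourhood of `[0,ω)` (with `ω ∈ (0,∞]`, thought of as its first positive
singularity), `Ω(0) = 0`, `Ω'(0) > 0`. Let `τ` be the smallest zero of `Ω'` in `[0,ω)`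
if one exists, and `τ = ω` otherwise. Then there is `ρ ∈ (0,∞]` and an analytic
continuation `Y` of the compositional inverse of `Ω` on a neighbourhood of `[0,ρ)`,
real-valued and increasing there, with `Ω(Y(z)) = z` and `Y(z) ∈ [0,ω)` on `[0,ρ)`,
`Y(z) → τ` as `z → ρ⁻` and `Ω(y) → ρ` as `y → τ⁻`. -/
theorem stmt9 (Ω : ℝ → ℝ) (ω : EReal) (hω : 0 < ω)
    (hΩan : AnalyticOnNhd ℝ Ω {y : ℝ | 0 ≤ y ∧ (y : EReal) < ω})
    (hΩ0 : Ω 0 = 0) (hΩ'0 : 0 < deriv Ω 0)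
    (τ : EReal) (hτω : τ ≤ ω)
    (hτ1 : ∀ y : ℝ, 0 ≤ y → (y : EReal) < τ → deriv Ω y ≠ 0)
    (hτ2 : τ = ω ∨ ∃ y : ℝ, 0 ≤ y ∧ (y : EReal) = τ ∧ deriv Ω y = 0) :
    ∃ ρ : EReal, 0 < ρ ∧ ∃ Y : ℝ → ℝ,
      AnalyticOnNhd ℝ Y {z : ℝ | 0 ≤ z ∧ (z : EReal) < ρ} ∧
      Y 0 = 0 ∧
      StrictMonoOn Y {z : ℝ | 0 ≤ z ∧ (z : EReal) < ρ} ∧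
      (∀ z : ℝ, 0 ≤ z → (z : EReal) < ρ →
        0 ≤ Y z ∧ ((Y z : EReal) < ω ∧ Ω (Y z) = z)) ∧
      Tendsto (fun z : ℝ => (Y z : EReal))
        (Filter.comap (fun z : ℝ => (z : EReal)) (nhdsWithin ρ (Iio ρ))) (nhds τ) ∧
      Tendsto (fun y : ℝ => (Ω y : EReal))
        (Filter.comap (fun y : ℝ => (y : EReal)) (nhdsWithin τ (Iio τ))) (nhds ρ) := by
  have hτ0 : 0 < τ := by
    rcases hτ2 with rfl | ⟨y, hy, rfl, hΩ'y⟩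
    · exact hω
    · exact EReal.coe_pos.mpr (hy.lt_of_ne fun h => hΩ'0.ne' (h ▸ hΩ'y))
  set S := {y : ℝ | 0 ≤ y ∧ (y : EReal) < τ}
  have hΩanS : AnalyticOnNhd ℝ Ω S := hΩan.mono fun y hy => ⟨hy.1, hy.2.trans_le hτω⟩
  have hΩc : ContinuousOn Ω S := fun y hy => (hΩanS y hy).continuousAt.continuousWithinAt
  obtain ⟨J, hJo, hSJ, hmono, hJ⟩ :=
    exists_isOpen_strictMonoOn_of_forall_deriv_ne_zero hΩanS hΩ'0 hτ1 hτ0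
  have hY (z : ℝ) (hz : 0 ≤ z) (hzρ : (z : EReal) < sSup ((fun y => (Ω y : EReal)) '' S)) :
      invFunOn Ω J z ∈ S ∧ Ω (invFunOn Ω J z) = z :=
    EReal.invFunOn_mem_of_lt_sSup_image hmono hSJ hΩc (by rwa [hΩ0]) hzρ
  have hYmono := EReal.strictMonoOn_invFunOn hmono hSJ hΩc
  rw [hΩ0] at hYmono
  refine ⟨_, by simpa [hΩ0] using EReal.coe_lt_sSup_image (hmono.mono hSJ) le_rfl hτ0,
    invFunOn Ω J, fun z hz => ?_, ?_, hYmono, fun z hz hzρ => ?_,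
    EReal.tendsto_invFunOn_comap_coe_nhdsLT_sSup_image hmono hSJ hΩc hτ0,
    EReal.tendsto_comap_coe_nhdsLT_sSup_image (hmono.mono hSJ) hτ0⟩
  · obtain ⟨hzS, hΩY⟩ := hY z hz.1 hz.2
    rw [← hΩY]
    exact analyticAt_invFunOn hJo hmono.injOn (hSJ hzS) (hJ _ (hSJ hzS)).1 (hJ _ (hSJ hzS)).2.ne'
  · simpa [hΩ0] using hmono.injOn.leftInvOn_invFunOn (hSJ ⟨le_rfl, hτ0⟩)
  · obtain ⟨⟨hY0, hYτ⟩, hΩY⟩ := hY z hz hzρ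
    exact ⟨hY0, hYτ.trans_le hτω, hΩY⟩
end

section
/- For every α ∈ (0,π) there exists ρ₀ > 0 such that for all ρ ∈ (0,ρ₀), the sector D_{−ρ ln ρ, α} = { 0 < |w| < −ρ ln ρ, |Arg w| < α } is contained in the image under H(z) = −z log z of the slit disk D_{ρ,π} = { 0 < |z| < ρ, |Arg z| < π }. -/
/-!
In the coordinate `z = exp ζ` the slit disk `D_{ρ,π}` becomes the half-strip
`{Re ζ < log ρ, |Im ζ| < π}` and `H` becomes the entire map `G ζ = -ζ e^ζ`, whose derivative
`-(1 + ζ) e^ζ` does not vanish there once `ρ < 1/e`; so `U = H(D_{ρ,π})` is open. The sector is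
connected and meets `U`, hence lies in `U` as soon as no point of the sector is a limit of `U`
outside `U`. Since `G ζ → 0` as `Re ζ → -∞`, such a limit point is `G ζ` for `ζ` on the boundary of
the strip. On `Re ζ = log ρ` we have `|G ζ| ≥ -ρ log ρ`; on `Im ζ = ±π`, `G ζ = e^{Re ζ} ζ` has
`|arg| = π - arctan (π / |Re ζ|) ≥ α`.
-/

/-- The sector `D_{r,θ} = { z = ρ e^{iφ} : 0 < ρ < r, |φ| < θ }`. -/
def sector (r θ : ℝ) : Set ℂ := {z : ℂ | z ≠ 0 ∧ ‖z‖ < r ∧ |z.arg| < θ}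

open Set Filter Topology Complex
open scoped Real ComplexConjugate

lemma abs_arg_eq_pi_sub_arctan {z : ℂ} (hre : z.re < 0) (him : z.im ≠ 0) :
    |arg z| = π - Real.arctan (|z.im| / -z.re) := by
  wlog him_pos : 0 < z.im generalizing z
  · have hconj := this (z := conj z) (by simpa using hre) (by simpa using him)
      (by simpa using lt_of_le_of_ne (not_lt.1 him_pos) him)
    have hne : arg z ≠ π := fun h => him (arg_eq_pi_iff.1 h).2
    simpa [arg_conj, hne] using hconj
  have hlt : arg z < π := arg_lt_pi_iff.2 (Or.inr him)
  have hgt : π / 2 < arg z := by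
    have := abs_arg_le_pi_div_two_iff.not.2 hre.not_ge
    rwa [not_le, abs_of_nonneg (arg_nonneg_iff.2 him_pos.le)] at this
  have htan : Real.tan (π - arg z) = |z.im| / -z.re := by
    rw [Real.tan_pi_sub, tan_arg, abs_of_pos him_pos, div_neg]
  rw [abs_of_pos (by linarith), ← htan, Real.arctan_tan (by linarith) (by linarith)]
  ring

lemma isOpen_image_of_hasStrictDerivAt {𝕜 : Type*} [NontriviallyNormedField 𝕜] [CompleteSpace 𝕜]
    {f f' : 𝕜 → 𝕜} {s : Set 𝕜} (hs : IsOpen s) (hf : ∀ x ∈ s, HasStrictDerivAt f (f' x) x)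
    (hf' : ∀ x ∈ s, f' x ≠ 0) : IsOpen (f '' s) := by
  rw [isOpen_iff_mem_nhds]
  rintro _ ⟨x, hx, rfl⟩
  rw [← (hf x hx).map_nhds_eq (hf' x hx)]
  exact image_mem_map (hs.mem_nhds hx)

lemma sector_eq_exp_image {r θ : ℝ} (hr : 0 < r) (hθ : θ ≤ π) :
    sector r θ = exp '' (Iio (Real.log r) ×ℂ Ioo (-θ) θ) := by
  ext z
  constructor
  · rintro ⟨hz, hzr, hzθ⟩
    refine ⟨log z, ⟨?_, by simpa [log_im] using abs_lt.1 hzθ⟩, exp_log hz⟩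
    simpa [log_re] using Real.log_lt_log (norm_pos_iff.2 hz) hzr
  · rintro ⟨ζ, ⟨hre, him⟩, rfl⟩
    have him' : |ζ.im| < θ := abs_lt.2 him
    have harg : arg (exp ζ) = ζ.im := by
      rw [← log_im, log_exp (by linarith [him.1]) (by linarith [him.2])]
    refine ⟨exp_ne_zero ζ, ?_, by rwa [harg]⟩
    rw [norm_exp, ← Real.exp_log hr]
    exact Real.exp_lt_exp.2 hre

lemma isPreconnected_sector {r θ : ℝ} (hr : 0 < r) (hθ : θ ≤ π) : IsPreconnected (sector r θ) := by
  rw [sector_eq_exp_image hr hθ]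
  exact ((convex_Iio _).is_linear_preimage reLm.isLinear |>.inter
    ((convex_Ioo _ _).is_linear_preimage imLm.isLinear)).isPreconnected.image _
    continuous_exp.continuousOn

noncomputable def negMulExp (ζ : ℂ) : ℂ := -ζ * exp ζ

lemma norm_negMulExp (ζ : ℂ) : ‖negMulExp ζ‖ = ‖ζ‖ * Real.exp ζ.re := by
  simp [negMulExp, norm_exp]

lemma continuous_negMulExp : Continuous negMulExp := by
  unfold negMulExp; fun_prop

lemma hasStrictDerivAt_negMulExp (ζ : ℂ) :
    HasStrictDerivAt negMulExp (-(ζ + 1) * exp ζ) ζ :=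
  ((hasStrictDerivAt_id ζ).neg.mul (hasStrictDerivAt_exp ζ)).congr_deriv <| by
    simp only [Pi.neg_apply, id]; ring

lemma negMulExp_of_abs_im_eq_pi {ζ : ℂ} (h : |ζ.im| = π) :
    negMulExp ζ = Real.exp ζ.re * ζ := by
  have hcos : Real.cos ζ.im = -1 := by rw [← Real.cos_abs, h, Real.cos_pi]
  have hsin : Real.sin ζ.im = 0 := by
    rcases abs_eq Real.pi_pos.le |>.1 h with h' | h' <;> simp [h']
  rw [negMulExp, exp_eq_exp_re_mul_sin_add_cos, ← ofReal_cos, ← ofReal_sin, hcos, hsin]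
  push_cast; ring

lemma neg_mul_log_comp_exp {ζ : ℂ} (h : ζ.im ∈ Ioo (-π) π) :
    -exp ζ * log (exp ζ) = negMulExp ζ := by
  rw [log_exp h.1 h.2.le, negMulExp]; ring

lemma image_sector_pi {ρ : ℝ} (hρ : 0 < ρ) :
    (fun z : ℂ => -z * log z) '' sector ρ π = negMulExp '' (Iio (Real.log ρ) ×ℂ Ioo (-π) π) := by
  rw [sector_eq_exp_image hρ le_rfl, image_image]
  exact image_congr fun ζ hζ => neg_mul_log_comp_exp hζ.2

lemma exists_norm_negMulExp_le {ε : ℝ} (hε : 0 < ε) :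
    ∃ M, ∀ ζ ∈ Iic M ×ℂ Icc (-π) π, ‖negMulExp ζ‖ ≤ ε := by
  have hlim : Tendsto (fun x : ℝ => (-x + π) * Real.exp x) atBot (𝓝 0) := by
    have h := (Real.tendsto_pow_mul_exp_neg_atTop_nhds_zero 1).add
      (Real.tendsto_exp_neg_atTop_nhds_zero.const_mul π)
    simp only [pow_one, mul_zero, add_zero] at h
    refine (h.comp tendsto_neg_atBot_atTop).congr fun x => ?_
    simp only [Function.comp_apply, neg_neg]; ring
  obtain ⟨M, hM⟩ := eventually_atBot.1 (hlim.eventually (ge_mem_nhds hε))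
  refine ⟨min M 0, fun ζ ⟨hre, him⟩ => ?_⟩
  have hre0 : ζ.re ≤ 0 := hre.trans (min_le_right _ _)
  calc ‖negMulExp ζ‖ = ‖ζ‖ * Real.exp ζ.re := norm_negMulExp ζ
    _ ≤ (-ζ.re + π) * Real.exp ζ.re := by
      gcongr
      calc ‖ζ‖ ≤ |ζ.re| + |ζ.im| := norm_le_abs_re_add_abs_im ζ
        _ ≤ -ζ.re + π := by rw [abs_of_nonpos hre0]; gcongr; exact abs_le.2 him
    _ ≤ ε := hM _ (hre.trans (min_le_left _ _))

lemma mem_image_of_mem_closure_image_strip {r : ℝ} {w : ℂ} (hw0 : w ≠ 0)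
    (hw : w ∈ closure (negMulExp '' (Iio r ×ℂ Ioo (-π) π))) :
    w ∈ negMulExp '' (Iic r ×ℂ Icc (-π) π) := by
  obtain ⟨M, hM⟩ := exists_norm_negMulExp_le (half_pos (norm_pos_iff.2 hw0))
  have hcover : Iio r ×ℂ Ioo (-π) π ⊆ Iic M ×ℂ Icc (-π) π ∪ Icc M r ×ℂ Icc (-π) π := by
    rintro ζ ⟨hre, him⟩
    rcases le_total ζ.re M with h | h
    · exact Or.inl ⟨h, Ioo_subset_Icc_self him⟩
    · exact Or.inr ⟨⟨h, hre.le⟩, Ioo_subset_Icc_self him⟩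
  have hcpt : IsCompact (negMulExp '' (Icc M r ×ℂ Icc (-π) π)) :=
    (isCompact_Icc.reProdIm isCompact_Icc).image continuous_negMulExp
  have hw' := closure_mono (image_mono hcover) hw
  rw [image_union, closure_union, hcpt.isClosed.closure_eq] at hw'
  rcases hw' with hsmall | hcompact
  · have hball : negMulExp '' (Iic M ×ℂ Icc (-π) π) ⊆ Metric.closedBall 0 (‖w‖ / 2) := by
      rintro _ ⟨ζ, hζ, rfl⟩
      simpa using hM ζ hζ
    have := closure_minimal hball Metric.isClosed_closedBall hsmall
    rw [mem_closedBall_zero_iff] at this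
    linarith [norm_pos_iff.2 hw0]
  · exact image_mono (reProdIm_subset_iff'.2 (Or.inl ⟨Icc_subset_Iic_self, subset_rfl⟩)) hcompact

lemma negMulExp_notMem_sector {ρ α : ℝ} (hρ0 : 0 < ρ) (hρ1 : ρ < 1)
    (hα : Real.arctan (π / -Real.log ρ) ≤ π - α) {ζ : ℂ}
    (hζ : ζ ∈ Iic (Real.log ρ) ×ℂ Icc (-π) π) (hζ' : ζ ∉ Iio (Real.log ρ) ×ℂ Ioo (-π) π) :
    negMulExp ζ ∉ sector (-ρ * Real.log ρ) α := by
  rintro ⟨-, hnorm, harg⟩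
  obtain ⟨hre, him⟩ : ζ.re ≤ Real.log ρ ∧ ζ.im ∈ Icc (-π) π := hζ
  have hlog : Real.log ρ < 0 := Real.log_neg hρ0 hρ1
  rcases hre.eq_or_lt with hre_eq | hre_lt
  · have : -Real.log ρ * ρ ≤ ‖negMulExp ζ‖ := by
      rw [norm_negMulExp, hre_eq, Real.exp_log hρ0]
      gcongr
      simpa [← hre_eq] using neg_le_abs ζ.re |>.trans (abs_re_le_norm ζ)
    linarith
  · have him_eq : |ζ.im| = π := by
      exact le_antisymm (abs_le.2 him) (not_lt.1 fun h => hζ' ⟨hre_lt, abs_lt.1 h⟩)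
    have hre_neg : ζ.re < 0 := hre_lt.trans hlog
    have him_ne : ζ.im ≠ 0 := fun h => Real.pi_ne_zero (by rw [← him_eq, h, abs_zero])
    rw [negMulExp_of_abs_im_eq_pi him_eq, arg_real_mul _ (Real.exp_pos _),
      abs_arg_eq_pi_sub_arctan hre_neg him_ne, him_eq] at harg
    have : Real.arctan (π / -ζ.re) ≤ Real.arctan (π / -Real.log ρ) :=
      Real.arctan_strictMono.monotone
        (div_le_div_of_nonneg_left Real.pi_pos.le (by linarith) (by linarith))
    linarith

lemma sector_subset_image_negMulExp {ρ α : ℝ} (hρ0 : 0 < ρ) (hρ : ρ < Real.exp (-1))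
    (hα0 : 0 < α) (hα : Real.arctan (π / -Real.log ρ) ≤ π - α) :
    sector (-ρ * Real.log ρ) α ⊆ negMulExp '' (Iio (Real.log ρ) ×ℂ Ioo (-π) π) := by
  have hlog : Real.log ρ < -1 := (Real.log_lt_iff_lt_exp hρ0).2 hρ
  have hρ1 : ρ < 1 := (Real.log_neg_iff hρ0).1 (by linarith)
  have hαπ : α ≤ π := by
    have : 0 < Real.arctan (π / -Real.log ρ) :=
      Real.arctan_pos.2 (div_pos Real.pi_pos (by linarith))
    linarith
  refine (isPreconnected_sector (by nlinarith) hαπ).subset_of_closure_inter_subset ?_ ?_ ?_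
  · refine isOpen_image_of_hasStrictDerivAt (isOpen_Iio.reProdIm isOpen_Ioo)
      (fun ζ _ => hasStrictDerivAt_negMulExp ζ) fun ζ hζ => ?_
    refine mul_ne_zero (neg_ne_zero.2 fun h => ?_) (exp_ne_zero ζ)
    have hre : ζ.re = -1 := by simpa using congrArg re (eq_neg_of_add_eq_zero_left h)
    have hlt : ζ.re < Real.log ρ := hζ.1
    linarith
  · have hval : negMulExp (2 * Real.log ρ : ℝ) = ((-(2 * Real.log ρ) * ρ ^ 2 : ℝ) : ℂ) := by
      rw [negMulExp, ← ofReal_exp, two_mul, Real.exp_add, Real.exp_log hρ0]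
      push_cast; ring
    have hpos : 0 < -(2 * Real.log ρ) * ρ ^ 2 := by nlinarith
    refine ⟨_, ⟨?_, ?_, ?_⟩, _, ⟨?_, ?_⟩, hval⟩
    · exact ofReal_ne_zero.2 hpos.ne'
    · rw [norm_real, Real.norm_of_nonneg hpos.le]
      nlinarith [Real.exp_neg_one_lt_half]
    · rwa [arg_ofReal_of_nonneg hpos.le, abs_zero]
    · show 2 * Real.log ρ < Real.log ρ
      linarith
    · simp [Real.pi_pos]
  · rintro w ⟨hcl, hw⟩
    obtain ⟨ζ, hζ, rfl⟩ := mem_image_of_mem_closure_image_strip hw.1 hcl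
    by_cases hζS : ζ ∈ Iio (Real.log ρ) ×ℂ Ioo (-π) π
    · exact ⟨ζ, hζS, rfl⟩
    · exact absurd hw (negMulExp_notMem_sector hρ0 hρ1 hα hζ hζS)

/-- For each `α ∈ (0,π)` there is `ρ₀ > 0` such that for all `ρ ∈ (0,ρ₀)` the sector
`D_{-ρ ln ρ, α}` is contained in the image of the slit disk `D_{ρ,π}` under
`H(z) = -z log z`. -/
theorem stmt11 (α : ℝ) (hα : α ∈ Set.Ioo 0 Real.pi) :
    ∃ ρ₀ > (0 : ℝ), ∀ ρ ∈ Set.Ioo (0 : ℝ) ρ₀,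
      sector (-ρ * Real.log ρ) α ⊆ (fun z : ℂ => -z * Complex.log z) '' sector ρ Real.pi := by
  have hsmall : ∀ᶠ ρ in 𝓝[>] 0, ρ < Real.exp (-1) :=
    nhdsWithin_le_nhds (gt_mem_nhds (Real.exp_pos _))
  have hangle : ∀ᶠ ρ in 𝓝[>] 0, Real.arctan (π / -Real.log ρ) ≤ π - α := by
    have hlim : Tendsto (fun ρ => Real.arctan (π / -Real.log ρ)) (𝓝[>] 0) (𝓝 0) := by
      simpa [Function.comp_def] using (Real.continuous_arctan.tendsto 0).comp
        (tendsto_const_nhds.div_atTop (tendsto_neg_atBot_atTop.comp Real.tendsto_log_nhdsGT_zero))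
    exact hlim.eventually (ge_mem_nhds (sub_pos.2 hα.2))
  obtain ⟨ρ₀, hρ₀, hsub⟩ := mem_nhdsGT_iff_exists_Ioo_subset.1 (hsmall.and hangle)
  refine ⟨ρ₀, hρ₀, fun ρ hρ => ?_⟩
  obtain ⟨hρe, hρα⟩ := hsub hρ
  rw [image_sector_pi hρ.1]
  exact sector_subset_image_negMulExp hρ.1 hρe hα.1 hρα
end

section
/- Let T be a finite tree with at least one edge and let 𝓕 be a stable set of spanning forests of T. Then every forest in 𝓕 has the same number f of flippable edges, and the generating polynomial A(u) = Σ_{F ∈ 𝓕} u^{c(F)} (where c(F) is the number of connected components of F) equals u(1+u)^f. -/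
/-!
Stability lets one grow any member of `𝓕` edge by edge up to the full edge set `E` without
changing the set of flippable edges; so `E ∈ 𝓕` and every member has the flippable set `S`
of `E`. An edge outside `S` is then in every member, while edges of `S` can be removed from
`E` freely, so `𝓕` consists exactly of the forests `E \ D` with `D ⊆ S`. In a tree, the
spanning forest with edge set `E \ D` has `#D + 1` components, whence
`Σ_{F ∈ 𝓕} u ^ c(F) = Σ_{D ⊆ S} u ^ (#D + 1) = u (1 + u) ^ #S`.
-/

/-- The number of connected components of the spanning subgraph with edge set `F`. -/
noncomputable def compCount {V : Type*} (F : Set (Sym2 V)) : ℕ :=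
  Nat.card (SimpleGraph.fromEdgeSet F).ConnectedComponent

open Finset

lemma Nat.card_subtype_ne_add_one {α : Type*} [Finite α] (x : α) :
    Nat.card {y // y ≠ x} + 1 = Nat.card α := by
  have := Fintype.ofFinite α
  classical
  rw [Nat.card_eq_fintype_card, Nat.card_eq_fintype_card, Fintype.card_subtype_compl,
    Fintype.card_subtype_eq]
  have := Fintype.card_pos_iff.2 ⟨x⟩
  omega

namespace Finset

variable {α : Type*} [DecidableEq α] {F : Finset α} {e : α}

lemma symmDiff_singleton_of_notMem (h : e ∉ F) : symmDiff F {e} = insert e F := by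
  ext x
  by_cases x = e <;> simp_all [mem_symmDiff]

lemma symmDiff_singleton_of_mem (h : e ∈ F) : symmDiff F {e} = F.erase e := by
  ext x
  by_cases x = e <;> simp_all [mem_symmDiff]

lemma sum_powerset_pow_card_add_one {ι R : Type*} [CommSemiring R] (u : R) (s : Finset ι) :
    ∑ t ∈ s.powerset, u ^ (#t + 1) = u * (1 + u) ^ #s := by
  rw [add_comm, ← sum_pow_mul_eq_add_pow, mul_sum]
  exact sum_congr rfl fun t _ => by rw [one_pow, mul_one, pow_succ']

end Finset

namespace SimpleGraph

variable {V : Type*} {G : SimpleGraph V} {a b x y : V}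

lemma Reachable.of_sup_edge (h : (G ⊔ edge a b).Reachable x y) :
    G.Reachable x y ∨ (G.Reachable x a ∧ G.Reachable b y) ∨
      (G.Reachable x b ∧ G.Reachable a y) := by
  obtain ⟨w⟩ := h
  induction w with
  | nil => exact Or.inl .rfl
  | cons h _ ih =>
    rcases h with h | h
    · have hr := h.reachable
      exact ih.imp hr.trans (Or.imp (And.imp_left hr.trans) (And.imp_left hr.trans))
    · obtain ⟨⟨rfl, rfl⟩ | ⟨rfl, rfl⟩, -⟩ := (edge_adj _ _ _ _).1 h
      · rcases ih with h | ⟨-, h⟩ | ⟨-, h⟩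
        exacts [Or.inr (Or.inl ⟨.rfl, h⟩), Or.inr (Or.inl ⟨.rfl, h⟩), Or.inl h]
      · rcases ih with h | ⟨-, h⟩ | ⟨-, h⟩
        exacts [Or.inr (Or.inr ⟨.rfl, h⟩), Or.inl h, Or.inr (Or.inr ⟨.rfl, h⟩)]

lemma card_connectedComponent_eq_card_sup_edge_add_one [Finite V] (hab : ¬G.Reachable a b) :
    Nat.card G.ConnectedComponent = Nat.card (G ⊔ edge a b).ConnectedComponent + 1 := by
  let f (c : {c : G.ConnectedComponent // c ≠ G.connectedComponentMk b}) :
      (G ⊔ edge a b).ConnectedComponent :=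
    c.1.map (Hom.ofLE le_sup_left)
  have hf : f.Bijective := by
    constructor
    · rintro ⟨c, hc⟩ ⟨d, hd⟩ hcd
      induction c using ConnectedComponent.ind with | _ x => ?_
      induction d using ConnectedComponent.ind with | _ y => ?_
      simp only [ne_eq, ConnectedComponent.eq] at hc hd
      simp only [f, ConnectedComponent.map_mk, ConnectedComponent.eq] at hcd
      rcases hcd.of_sup_edge with h | ⟨-, h⟩ | ⟨h, -⟩
      · exact Subtype.ext (ConnectedComponent.sound h)
      · exact absurd h.symm hd
      · exact absurd h hc
    · refine ConnectedComponent.ind fun x => ?_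
      by_cases hx : G.Reachable x b
      · refine ⟨⟨G.connectedComponentMk a, fun h => hab (ConnectedComponent.exact h)⟩, ?_⟩
        simp only [f, ConnectedComponent.map_mk, ConnectedComponent.eq]
        have hadj : (G ⊔ edge a b).Adj a b :=
          Or.inr ((edge_adj ..).2 ⟨Or.inl ⟨rfl, rfl⟩, fun h => hab (h ▸ .rfl)⟩)
        exact hadj.reachable.trans (hx.mono le_sup_left).symm
      · exact ⟨⟨_, fun h => hx (ConnectedComponent.exact h)⟩, rfl⟩
  rw [← Nat.card_eq_of_bijective f hf, Nat.card_subtype_ne_add_one]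

lemma card_connectedComponent_bot [Finite V] :
    Nat.card (⊥ : SimpleGraph V).ConnectedComponent = Nat.card V :=
  (Nat.card_eq_of_bijective _ ⟨fun _ _ h => reachable_bot.1 (ConnectedComponent.exact h),
    Quot.mk_surjective⟩).symm

theorem IsAcyclic.card_connectedComponent_fromEdgeSet_add_card [Finite V] (hG : G.IsAcyclic)
    {F : Finset (Sym2 V)} (hF : (F : Set (Sym2 V)) ⊆ G.edgeSet) :
    Nat.card (fromEdgeSet (F : Set (Sym2 V))).ConnectedComponent + #F = Nat.card V := by
  classical
  induction F using Finset.induction_on with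
  | empty => simp [card_connectedComponent_bot]
  | @insert e F he ih =>
    induction e using Sym2.ind with | _ a b => ?_
    have hab : s(a, b) ∈ G.edgeSet := hF (mem_insert_self _ F)
    have hsplit : fromEdgeSet ↑(insert s(a, b) F) = fromEdgeSet ↑F ⊔ edge a b := by
      rw [coe_insert, Set.insert_eq, Set.union_comm, fromEdgeSet_union, edge]
    have hacyc : (fromEdgeSet ↑F ⊔ edge a b).IsAcyclic :=
      hG.anti (hsplit ▸ (fromEdgeSet_le G).2 (Set.sdiff_subset.trans hF))
    have hnr : ¬(fromEdgeSet (F : Set (Sym2 V))).Reachable a b := fun h => by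
      rcases (isAcyclic_sup_fromEdgeSet_iff.1 hacyc).2 h with rfl | hadj
      · exact (G.mem_edgeSet.1 hab).ne rfl
      · exact he ((fromEdgeSet_adj _).1 hadj).1
    rw [hsplit, card_insert_of_notMem he, ← add_assoc, add_right_comm,
      ← card_connectedComponent_eq_card_sup_edge_add_one hnr,
      ih ((coe_subset.2 (subset_insert _ F)).trans hF)]

end SimpleGraph

section StableFamily

variable {α : Type*} [DecidableEq α]

def flippable (E : Finset α) (𝓕 : Finset (Finset α)) (F : Finset α) : Finset α :=
  E.filter fun e => symmDiff F {e} ∈ 𝓕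

structure IsStableFamily (E : Finset α) (𝓕 : Finset (Finset α)) : Prop where
  subset : ∀ F ∈ 𝓕, F ⊆ E
  symmDiff_mem_of_notMem : ∀ F ∈ 𝓕, ∀ e ∈ E, e ∉ F → symmDiff F {e} ∈ 𝓕
  symmDiff_mem_iff : ∀ F ∈ 𝓕, ∀ e ∈ E, symmDiff F {e} ∈ 𝓕 →
    ∀ e' ∈ E, (symmDiff F {e'} ∈ 𝓕 ↔ symmDiff (symmDiff F {e}) {e'} ∈ 𝓕)

namespace IsStableFamily

variable {E F : Finset α} {𝓕 : Finset (Finset α)}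

lemma flippable_symmDiff (hs : IsStableFamily E 𝓕) (hF : F ∈ 𝓕) {e : α} (he : e ∈ E)
    (hflip : symmDiff F {e} ∈ 𝓕) : flippable E 𝓕 (symmDiff F {e}) = flippable E 𝓕 F := by
  ext e'
  simp only [flippable, mem_filter]
  exact and_congr_right fun he' => (hs.symmDiff_mem_iff F hF e he hflip e' he').symm

lemma union_mem_and_flippable_eq (hs : IsStableFamily E 𝓕) (hF : F ∈ 𝓕) {D : Finset α}
    (hD : D ⊆ E \ F) : F ∪ D ∈ 𝓕 ∧ flippable E 𝓕 (F ∪ D) = flippable E 𝓕 F := by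
  induction D using Finset.induction_on with
  | empty => simpa using hF
  | @insert e D he ih =>
    obtain ⟨heE, heF⟩ := mem_sdiff.1 (hD (mem_insert_self e D))
    obtain ⟨hmem, hflippable⟩ := ih ((subset_insert e D).trans hD)
    have heFD : e ∉ F ∪ D := by simp [heF, he]
    have hflip := hs.symmDiff_mem_of_notMem _ hmem e heE heFD
    rw [union_insert, ← symmDiff_singleton_of_notMem heFD]
    exact ⟨hflip, (hs.flippable_symmDiff hmem heE hflip).trans hflippable⟩

lemma self_mem (hs : IsStableFamily E 𝓕) (hF : F ∈ 𝓕) : E ∈ 𝓕 := by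
  simpa [union_sdiff_of_subset (hs.subset F hF)] using
    (hs.union_mem_and_flippable_eq hF (subset_refl _)).1

lemma flippable_eq (hs : IsStableFamily E 𝓕) (hF : F ∈ 𝓕) :
    flippable E 𝓕 F = flippable E 𝓕 E := by
  simpa [union_sdiff_of_subset (hs.subset F hF)] using
    (hs.union_mem_and_flippable_eq hF (subset_refl _)).2.symm

lemma sdiff_mem (hs : IsStableFamily E 𝓕) (hE : E ∈ 𝓕) {D : Finset α}
    (hD : D ⊆ flippable E 𝓕 E) : E \ D ∈ 𝓕 := by
  induction D using Finset.induction_on with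
  | empty => simpa using hE
  | @insert e D he ih =>
    have hmem := ih ((subset_insert e D).trans hD)
    have heS : e ∈ flippable E 𝓕 (E \ D) := hs.flippable_eq hmem ▸ hD (mem_insert_self e D)
    have heED : e ∈ E \ D := mem_sdiff.2 ⟨(mem_filter.1 heS).1, he⟩
    rw [sdiff_insert, ← symmDiff_singleton_of_mem heED]
    exact (mem_filter.1 heS).2

theorem eq_image_sdiff (hs : IsStableFamily E 𝓕) (hne : 𝓕.Nonempty) :
    𝓕 = (flippable E 𝓕 E).powerset.image (E \ ·) := by
  obtain ⟨F₀, hF₀⟩ := hne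
  ext F
  constructor
  · intro hF
    refine mem_image.2 ⟨E \ F, mem_powerset.2 fun e he => ?_,
      Finset.sdiff_sdiff_eq_self (hs.subset F hF)⟩
    obtain ⟨heE, heF⟩ := mem_sdiff.1 he
    rw [← hs.flippable_eq hF]
    exact mem_filter.2 ⟨heE, hs.symmDiff_mem_of_notMem F hF e heE heF⟩
  · intro hF
    obtain ⟨D, hD, rfl⟩ := mem_image.1 hF
    exact hs.sdiff_mem (hs.self_mem hF₀) (mem_powerset.1 hD)

end IsStableFamily

end StableFamily

theorem SimpleGraph.IsTree.compCount_edgeFinset_sdiff {V : Type*} [Fintype V] [DecidableEq V]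
    {T : SimpleGraph V} [DecidableRel T.Adj] (hT : T.IsTree) {D : Finset (Sym2 V)}
    (hD : D ⊆ T.edgeFinset) : compCount (↑(T.edgeFinset \ D) : Set (Sym2 V)) = #D + 1 := by
  have hforest := hT.isAcyclic.card_connectedComponent_fromEdgeSet_add_card
    (F := T.edgeFinset \ D) (by simp)
  have htree := hT.card_edgeFinset
  rw [card_sdiff_of_subset hD, Nat.card_eq_fintype_card (α := V)] at hforest
  have := card_le_card hD
  unfold compCount
  omega

theorem stmt12_general {V : Type} [Fintype V] [DecidableEq V]
    (T : SimpleGraph V) [DecidableRel T.Adj] (hT : T.IsTree)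
    (𝓕 : Finset (Finset (Sym2 V))) (h𝓕 : 𝓕.Nonempty)
    (hsub : ∀ F ∈ 𝓕, F ⊆ T.edgeFinset)
    (hstable1 : ∀ F ∈ 𝓕, ∀ e ∈ T.edgeFinset, e ∉ F → symmDiff F {e} ∈ 𝓕)
    (hstable2 : ∀ F ∈ 𝓕, ∀ e ∈ T.edgeFinset, symmDiff F {e} ∈ 𝓕 →
      ∀ e' ∈ T.edgeFinset, (symmDiff F {e'} ∈ 𝓕 ↔ symmDiff (symmDiff F {e}) {e'} ∈ 𝓕)) :
    ∃ f : ℕ,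
      (∀ F ∈ 𝓕, (T.edgeFinset.filter fun e => symmDiff F {e} ∈ 𝓕).card = f) ∧
      ∀ u : ℝ, (∑ F ∈ 𝓕, u ^ compCount (F : Set (Sym2 V))) = u * (1 + u) ^ f := by
  have hs : IsStableFamily T.edgeFinset 𝓕 := ⟨hsub, hstable1, hstable2⟩
  set S := flippable T.edgeFinset 𝓕 T.edgeFinset
  have hS : S ⊆ T.edgeFinset := filter_subset _ _
  refine ⟨#S, fun F hF => congrArg card (hs.flippable_eq hF), fun u => ?_⟩
  have hinj : Set.InjOn (T.edgeFinset \ ·) S.powerset := fun D₁ h₁ D₂ h₂ h => by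
    simp only at h
    rw [← Finset.sdiff_sdiff_eq_self ((mem_powerset.1 h₁).trans hS), h,
      Finset.sdiff_sdiff_eq_self ((mem_powerset.1 h₂).trans hS)]
  rw [hs.eq_image_sdiff h𝓕, sum_image hinj, ← sum_powerset_pow_card_add_one]
  exact sum_congr rfl fun D hD => by
    rw [hT.compCount_edgeFinset_sdiff ((mem_powerset.1 hD).trans hS)]

/-- Let `T` be a finite tree with at least one edge, and let `𝓕` be a nonempty stable
set of spanning forests of `T` (forests = subsets of the edge set of `T`; an edge `e` is
flippable for `F ∈ 𝓕` if the symmetric difference `F Δ {e}` is again in `𝓕`; stability: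
every edge outside `F` is flippable, and flipping a flippable edge preserves the set of
flippable edges). Then all members of `𝓕` have the same number `f` of flippable edges,
and `Σ_{F ∈ 𝓕} u^{c(F)} = u (1+u)^f` where `c(F)` is the number of components of the
spanning subgraph `(V(T), F)`. -/
theorem stmt12 {V : Type} [Fintype V] [DecidableEq V]
    (T : SimpleGraph V) [DecidableRel T.Adj] (hT : T.IsTree)
    (hE : T.edgeFinset.Nonempty)
    (𝓕 : Finset (Finset (Sym2 V))) (h𝓕 : 𝓕.Nonempty)
    (hsub : ∀ F ∈ 𝓕, F ⊆ T.edgeFinset)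
    (hstable1 : ∀ F ∈ 𝓕, ∀ e ∈ T.edgeFinset, e ∉ F → symmDiff F {e} ∈ 𝓕)
    (hstable2 : ∀ F ∈ 𝓕, ∀ e ∈ T.edgeFinset, symmDiff F {e} ∈ 𝓕 →
      ∀ e' ∈ T.edgeFinset, (symmDiff F {e'} ∈ 𝓕 ↔ symmDiff (symmDiff F {e}) {e'} ∈ 𝓕)) :
    ∃ f : ℕ,
      (∀ F ∈ 𝓕, (T.edgeFinset.filter fun e => symmDiff F {e} ∈ 𝓕).card = f) ∧
      ∀ u : ℝ, (∑ F ∈ 𝓕, u ^ compCount (F : Set (Sym2 V))) = u * (1 + u) ^ f :=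
  stmt12_general T hT 𝓕 h𝓕 hsub hstable1 hstable2
end

section
/- The power series Φ(x) = Σ_{i≥2} (3i−3)!/((i−1)!² · i!) x^i satisfies the differential equation x(27x−1)Φ''(x) + 6Φ(x) + 6x = 0. -/
open PowerSeries

noncomputable def PhiPS : PowerSeries ℚ :=
  PowerSeries.mk fun i =>
    if 2 ≤ i then ((3 * i - 3).factorial : ℚ) / (((i - 1).factorial) ^ 2 * i.factorial)
    else 0

/-!
Comparing coefficients of `x^n`, the equation says `n(n+1) aₙ₊₁ = (27n(n-1) + 6) aₙ` up to the
correction `6x` at `n = 1`. Since `27n(n-1) + 6 = 3(3n-1)(3n-2)`, this is the ratio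
`aₙ₊₁ / aₙ = 3n(3n-1)(3n-2) / (n²(n+1))` of consecutive terms `aₙ = (3n-3)!/((n-1)!² n!)`.
-/

section Derivative

variable {R : Type*} [CommRing R]

theorem coeff_X_mul_derivative_derivative (f : R⟦X⟧) (n : ℕ) :
    coeff n (X * d⁄dX R (d⁄dX R f)) = (n + 1) * n * coeff (n + 1) f := by
  cases n with
  | zero => simp
  | succ k =>
    rw [coeff_succ_X_mul, coeff_derivative, coeff_derivative]
    push_cast
    ring

theorem coeff_X_sq_mul_derivative_derivative (f : R⟦X⟧) (n : ℕ) :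
    coeff n (X ^ 2 * d⁄dX R (d⁄dX R f)) = n * (n - 1) * coeff n f := by
  rcases n with _ | _ | k
  · simp
  · simp [coeff_X_pow_mul']
  · rw [show k + 1 + 1 = k + 2 from rfl, coeff_X_pow_mul, coeff_derivative, coeff_derivative]
    push_cast
    ring

end Derivative

theorem coeff_PhiPS_add_two (m : ℕ) :
    coeff (m + 2) PhiPS =
      ((3 * m + 3).factorial : ℚ) / ((m + 1).factorial ^ 2 * (m + 2).factorial) := by
  simp only [PhiPS, coeff_mk, le_add_iff_nonneg_left, zero_le, if_true]
  congr 4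

theorem coeff_PhiPS_of_lt_two {n : ℕ} (hn : n < 2) : coeff n PhiPS = 0 := by
  simp [PhiPS, coeff_mk, Nat.not_le.mpr hn]

theorem coeff_PhiPS_succ_recurrence {n : ℕ} (hn : 2 ≤ n) :
    (n + 1) * n * coeff (n + 1) PhiPS = 3 * (3 * n - 1) * (3 * n - 2) * coeff n PhiPS := by
  obtain ⟨m, rfl⟩ := Nat.exists_eq_add_of_le' hn
  rw [coeff_PhiPS_add_two, show m + 2 + 1 = (m + 1) + 2 by ring, coeff_PhiPS_add_two,
    show 3 * (m + 1) + 3 = (3 * m + 3) + 3 by ring]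
  simp only [Nat.factorial_succ]
  push_cast
  field_simp
  ring

/-- `Φ` satisfies `x(27x-1)Φ''(x) + 6Φ(x) + 6x = 0`. -/
theorem stmt13 :
    X * (27 * X - 1) * (d⁄dX ℚ (d⁄dX ℚ PhiPS)) + 6 * PhiPS + 6 * X = 0 := by
  have expand : X * (27 * X - 1) * (d⁄dX ℚ (d⁄dX ℚ PhiPS)) + 6 * PhiPS + 6 * X =
      C 27 * (X ^ 2 * d⁄dX ℚ (d⁄dX ℚ PhiPS)) - X * d⁄dX ℚ (d⁄dX ℚ PhiPS)
        + C 6 * PhiPS + C 6 * X := by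
    simp only [map_ofNat]
    ring
  rw [expand]
  ext n
  simp only [map_add, map_sub, coeff_C_mul, coeff_X_sq_mul_derivative_derivative,
    coeff_X_mul_derivative_derivative, map_zero]
  rcases n with _ | _ | m
  · simp [coeff_PhiPS_of_lt_two]
  · norm_num [coeff_PhiPS_of_lt_two, coeff_PhiPS_add_two, Nat.factorial]
  · have recurrence := coeff_PhiPS_succ_recurrence (n := m + 2) (by omega)
    rw [coeff_X, if_neg (by omega)]
    linear_combination -recurrence
end

section
/- The power series Ψ₁(z) = Σ_{i≥1} (4i−4)!/((2i−2)! · i! · (i−1)!) z^i and Ψ₂(z) = Σ_{i≥1} (4i−2)!/((2i−1)! · (i!)²) z^i satisfy the two identities (1−64z)Ψ₁'(z) + 48Ψ₁(z) + 2Ψ₂(z) = 1 and z(1−64z)Ψ₂'(z) + 6Ψ₁(z) + 16zΨ₂(z) = 8z. -/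
open PowerSeries

/-- `Ψ₁(z) = Σ_{i≥1} (4i-4)!/((2i-2)! i! (i-1)!) z^i`. -/
noncomputable def Psi1PS : PowerSeries ℚ :=
  PowerSeries.mk fun i =>
    if 1 ≤ i then
      ((4 * i - 4).factorial : ℚ) / ((2 * i - 2).factorial * i.factorial * (i - 1).factorial)
    else 0

/-- `Ψ₂(z) = Σ_{i≥1} (4i-2)!/((2i-1)! (i!)²) z^i`. -/
noncomputable def Psi2PS : PowerSeries ℚ :=
  PowerSeries.mk fun i =>
    if 1 ≤ i then ((4 * i - 2).factorial : ℚ) / ((2 * i - 1).factorial * (i.factorial) ^ 2)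
    else 0

/-!
Write `a j = psi1Coeff j` and `b j = psi2Coeff j` for the coefficients of `z^(j+1)` in `Ψ₁`
and `Ψ₂`; shifting the index removes the truncated subtractions in the definitions. Both
sequences are hypergeometric:
`(j+1) b j = 2(4j+1) a j` and `(j+2)(j+1) a (j+1) = 4(4j+1)(4j+3) a j`. Comparing coefficients
turns each differential identity into a three-term linear recurrence in `a` and `b`, which after
multiplying by `j+1` is a linear combination of these two ratio relations.
-/

theorem PowerSeries.coeff_ofNat_mul {R : Type*} [Semiring R] (m : ℕ) [m.AtLeastTwo] (n : ℕ)
    (f : R⟦X⟧) : coeff n ((ofNat(m) : R⟦X⟧) * f) = ofNat(m) * coeff n f := by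
  rw [← map_ofNat C, coeff_C_mul]

noncomputable def psi1Coeff (j : ℕ) : ℚ :=
  (4 * j).factorial / ((2 * j).factorial * (j + 1).factorial * j.factorial)

noncomputable def psi2Coeff (j : ℕ) : ℚ :=
  (4 * j + 2).factorial / ((2 * j + 1).factorial * (j + 1).factorial ^ 2)

theorem succ_mul_psi2Coeff (j : ℕ) :
    ((j : ℚ) + 1) * psi2Coeff j = 2 * (4 * j + 1) * psi1Coeff j := by
  simp only [psi1Coeff, psi2Coeff, Nat.factorial_succ]
  push_cast
  field_simp
  ring

theorem psi1Coeff_succ (j : ℕ) :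
    ((j : ℚ) + 2) * (j + 1) * psi1Coeff (j + 1)
      = 4 * (4 * j + 1) * (4 * j + 3) * psi1Coeff j := by
  simp only [psi1Coeff, show 4 * (j + 1) = 4 * j + 3 + 1 by ring,
    show 2 * (j + 1) = 2 * j + 1 + 1 by ring, Nat.factorial_succ]
  push_cast
  field_simp
  ring

theorem coeff_zero_Psi1PS : coeff 0 Psi1PS = 0 := by simp [Psi1PS]

theorem coeff_zero_Psi2PS : coeff 0 Psi2PS = 0 := by simp [Psi2PS]

theorem coeff_succ_Psi1PS (j : ℕ) : coeff (j + 1) Psi1PS = psi1Coeff j := by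
  simp only [Psi1PS, psi1Coeff, coeff_mk, if_pos (Nat.le_add_left 1 j), Nat.add_sub_cancel,
    show 4 * (j + 1) - 4 = 4 * j by omega, show 2 * (j + 1) - 2 = 2 * j by omega]

theorem coeff_succ_Psi2PS (j : ℕ) : coeff (j + 1) Psi2PS = psi2Coeff j := by
  simp only [Psi2PS, psi2Coeff, coeff_mk, if_pos (Nat.le_add_left 1 j),
    show 4 * (j + 1) - 2 = 4 * j + 2 by omega, show 2 * (j + 1) - 1 = 2 * j + 1 by omega]

theorem psi1Coeff_recurrence (j : ℕ) :
    ((j : ℚ) + 2) * psi1Coeff (j + 1) - 64 * (j + 1) * psi1Coeff j + 48 * psi1Coeff j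
      + 2 * psi2Coeff j = 0 := by
  apply mul_left_cancel₀ (by positivity : (j : ℚ) + 1 ≠ 0)
  linear_combination psi1Coeff_succ j + 2 * succ_mul_psi2Coeff j

theorem psi2Coeff_recurrence (j : ℕ) :
    ((j : ℚ) + 2) * psi2Coeff (j + 1) - 64 * (j + 1) * psi2Coeff j + 6 * psi1Coeff (j + 1)
      + 16 * psi2Coeff j = 0 := by
  apply mul_left_cancel₀ (by positivity : (j : ℚ) + 1 ≠ 0)
  linear_combination (norm := (push_cast; ring1))
    ((j : ℚ) + 1) * succ_mul_psi2Coeff (j + 1) + 8 * psi1Coeff_succ j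
      - (64 * (j : ℚ) + 48) * succ_mul_psi2Coeff j

theorem Psi1PS_ode : (1 - 64 * X) * d⁄dX ℚ Psi1PS + 48 * Psi1PS + 2 * Psi2PS = 1 := by
  ext (_ | j) <;>
    simp only [sub_mul, one_mul, mul_assoc, map_add, map_sub, coeff_ofNat_mul, coeff_zero_X_mul,
      coeff_succ_X_mul, coeff_derivative, coeff_zero_Psi1PS, coeff_zero_Psi2PS,
      coeff_succ_Psi1PS, coeff_succ_Psi2PS, coeff_one]
  · norm_num [psi1Coeff]
  · push_cast
    linear_combination psi1Coeff_recurrence j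

theorem Psi2PS_ode :
    X * (1 - 64 * X) * d⁄dX ℚ Psi2PS + 6 * Psi1PS + 16 * X * Psi2PS = 8 * X := by
  ext (_ | _ | j) <;>
    simp only [mul_sub, sub_mul, mul_one, mul_assoc, mul_left_comm X, map_add, map_sub,
      coeff_ofNat_mul, coeff_zero_X_mul, coeff_succ_X_mul, coeff_derivative, coeff_zero_Psi1PS,
      coeff_zero_Psi2PS, coeff_succ_Psi1PS, coeff_succ_Psi2PS, coeff_X]
  · norm_num
  · norm_num [psi1Coeff, psi2Coeff]
  · push_cast
    linear_combination psi2Coeff_recurrence j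

/-- `(1-64z)Ψ₁' + 48Ψ₁ + 2Ψ₂ = 1` and `z(1-64z)Ψ₂' + 6Ψ₁ + 16zΨ₂ = 8z`. -/
theorem stmt15 :
    (1 - 64 * X) * (d⁄dX ℚ Psi1PS) + 48 * Psi1PS + 2 * Psi2PS = 1 ∧
    X * (1 - 64 * X) * (d⁄dX ℚ Psi2PS) + 6 * Psi1PS + 16 * X * Psi2PS = 8 * X :=
  ⟨Psi1PS_ode, Psi2PS_ode⟩
end
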